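/- arXiv:1401.0611 — 2 statements merged into one kernel-verified Lean document; each statement's English description precedes it below -/
import Mathlib

section
/- Let X be a Coxeter graph satisfying condition (★), s ∈ S(X), and w ∈ W_c(X). Then t_s c_w = −c_w + q^{1/2}( c_{sw} + Σ_{x ≺ w, sx < x} μ(x,w) c_x ) if ℓ(sw) > ℓ(w), and t_s c_w = q c_w otherwise, where by convention c_x = 0 for x ∉ W_c(X). -/
/-!
Common setup: Coxeter systems, Bruhat order, fully commutative elements,
the Hecke algebra `H(X)`, the generalized Temperley--Lieb algebra `TL(X)`,
and the polynomial families `R`, `P` (Kazhdan--Lusztig), `D`, `a`, `L`.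
-/

open LaurentPolynomial Polynomial

noncomputable section

namespace TLPaper

/-- The ring `A = ℤ[q^{1/2}, q^{-1/2}]`, modelled as Laurent polynomials over `ℤ`
in the variable `T = q^{1/2}`. -/
abbrev A : Type := LaurentPolynomial ℤ

/-- The element `q = (q^{1/2})^2` of `A`. -/
def q : A := LaurentPolynomial.T 2

variable {B : Type*} {W : Type*} [Group W] {M : CoxeterMatrix B} (cs : CoxeterSystem M W)

/-- The Bruhat order on a Coxeter group: the reflexive-transitive closure of the relation
`x → xt` where `t` is a reflection and the length increases. -/
def bruhatLE : W → W → Prop :=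
  Relation.ReflTransGen
    (fun x y => (∃ t : W, cs.IsReflection t ∧ y = x * t) ∧ cs.length x < cs.length y)

/-- Strict Bruhat order. -/
def bruhatLT (x w : W) : Prop := bruhatLE cs x w ∧ x ≠ w

/-- A single commutation move on words: interchanging two adjacent commuting letters
(i.e. letters `i`, `j` with `M i j = 2`). -/
def CommMove (M : CoxeterMatrix B) (l₁ l₂ : List B) : Prop :=
  ∃ (a b : List B) (i j : B), M i j = 2 ∧ l₁ = a ++ i :: j :: b ∧ l₂ = a ++ j :: i :: b

/-- An element `w` is *fully commutative* if any reduced word for `w` can be obtained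
from any other by a sequence of commutation moves. -/
def FullyCommutative (w : W) : Prop :=
  ∀ l₁ l₂ : List B, (cs.IsReduced l₁ ∧ cs.wordProd l₁ = w) →
    (cs.IsReduced l₂ ∧ cs.wordProd l₂ = w) →
    Relation.ReflTransGen (CommMove M) l₁ l₂

/-- All the data of the paper: the Hecke algebra `H` of the Coxeter system `cs` with its
standard basis `Tw`, the `R`-polynomials, the Kazhdan--Lusztig polynomials `P`,
the generalized Temperley--Lieb algebra `TL = H/J` (with `proj` the canonical projection),
the `D`-polynomials, the `a`-polynomials, and the IC basis `c` with its `L`-polynomials.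
The polynomial `L x w` is a polynomial in the variable `v = q^{-1/2}`;
all other polynomial families are polynomials in `q`. -/
structure TLContext {B : Type*} {W : Type*} [Group W] {M : CoxeterMatrix B}
    (cs : CoxeterSystem M W)
    (H : Type*) [Ring H] [Algebra A H] (TL : Type*) [Ring TL] [Algebra A TL] where
  /-- The standard basis `{T_w}` of the Hecke algebra. -/
  Tw : W → H
  Tw_indep : LinearIndependent A Tw
  Tw_span : Submodule.span A (Set.range Tw) = ⊤
  Tw_one : Tw 1 = 1
  /-- Multiplication rule, case `ℓ(ws) > ℓ(w)`. -/
  Tw_mul_simple_of_lt : ∀ (w : W) (i : B),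
    cs.length w < cs.length (w * cs.simple i) →
    Tw w * Tw (cs.simple i) = Tw (w * cs.simple i)
  /-- Multiplication rule, case `ℓ(ws) < ℓ(w)`. -/
  Tw_mul_simple_of_gt : ∀ (w : W) (i : B),
    cs.length (w * cs.simple i) < cs.length w →
    Tw w * Tw (cs.simple i) = q • Tw (w * cs.simple i) + (q - 1) • Tw w
  /-- `Tinv w` is the inverse of `T_w` in `H`. -/
  Tinv : W → H
  Tw_mul_Tinv : ∀ w : W, Tw w * Tinv w = 1
  Tinv_mul_Tw : ∀ w : W, Tinv w * Tw w = 1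
  /-- Bruhat lower sets are finite. -/
  finite_bruhatLE : ∀ w : W, {x | bruhatLE cs x w}.Finite
  /-- The `R`-polynomials. -/
  R : W → W → Polynomial ℤ
  R_self : ∀ w : W, R w w = 1
  R_eq_zero : ∀ x w : W, ¬ bruhatLE cs x w → R x w = 0
  /-- `T_{w⁻¹}⁻¹ = ε_w q^{-ℓ(w)} Σ_{x ≤ w} ε_x R_{x,w}(q) T_x`. -/
  Tinv_eq : ∀ w : W, Tinv w⁻¹ =
    ((-1 : A) ^ cs.length w * LaurentPolynomial.T (-2 * (cs.length w : ℤ))) •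
      ∑ᶠ x ∈ {x | bruhatLE cs x w},
        ((-1 : A) ^ cs.length x * Polynomial.aeval q (R x w)) • Tw x
  /-- The Kazhdan--Lusztig polynomials. -/
  P : W → W → Polynomial ℤ
  P_self : ∀ w : W, P w w = 1
  P_eq_zero : ∀ x w : W, ¬ bruhatLE cs x w → P x w = 0
  /-- `deg P_{x,w} ≤ (ℓ(w) - ℓ(x) - 1)/2` for `x < w`. -/
  P_degree : ∀ x w : W, bruhatLT cs x w →
    2 * (P x w).natDegree + 1 ≤ cs.length w - cs.length x
  /-- The involution `ι` of the Hecke algebra. -/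
  iotaH : H →+* H
  iotaH_involutive : ∀ h : H, iotaH (iotaH h) = h
  iotaH_Tw : ∀ w : W, iotaH (Tw w) = Tinv w⁻¹
  iotaH_smul : ∀ (a : A) (h : H),
    iotaH (a • h) = (LaurentPolynomial.invert (R := ℤ) a) • iotaH h
  /-- `ι` fixes the Kazhdan--Lusztig basis element
  `C'_w = q^{-ℓ(w)/2} Σ_{x ≤ w} P_{x,w}(q) T_x`. -/
  iotaH_KL : ∀ w : W,
    iotaH ((LaurentPolynomial.T (-(cs.length w : ℤ)) : A) •
      ∑ᶠ x ∈ {x | bruhatLE cs x w}, (Polynomial.aeval q (P x w)) • Tw x) =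
    (LaurentPolynomial.T (-(cs.length w : ℤ)) : A) •
      ∑ᶠ x ∈ {x | bruhatLE cs x w}, (Polynomial.aeval q (P x w)) • Tw x
  /-- The canonical projection `σ : H → TL = H/J`. -/
  proj : H →ₐ[A] TL
  proj_surjective : Function.Surjective proj
  /-- The kernel of `σ` is the two-sided ideal `J` generated by the elements
  `Σ_{w ∈ ⟨s_i, s_j⟩} T_w`, over all pairs of non-commuting generators `s_i, s_j`
  such that `s_i s_j` has finite order. -/
  proj_ker : ∀ h : H, proj h = 0 ↔ h ∈ Submodule.span A
    {x : H | ∃ (i j : B) (a b : H), M i j ≠ 0 ∧ M i j ≠ 1 ∧ M i j ≠ 2 ∧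
      x = a * (∑ᶠ u ∈ (Subgroup.closure {cs.simple i, cs.simple j} : Set W), Tw u) * b}
  /-- The images `t_w = σ(T_w)`, `w` fully commutative, are linearly independent. -/
  t_indep : LinearIndependent A
    (fun x : {w : W // FullyCommutative cs w} => proj (Tw x.1))
  /-- The `D`-polynomials. -/
  D : W → W → Polynomial ℤ
  /-- `t_w = Σ_{x ∈ W_c, x ≤ w} D_{x,w}(q) t_x`. -/
  D_eq : ∀ w : W, proj (Tw w) =
    ∑ᶠ x ∈ {x | FullyCommutative cs x ∧ bruhatLE cs x w},
      (Polynomial.aeval q (D x w)) • proj (Tw x)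
  D_self : ∀ w : W, FullyCommutative cs w → D w w = 1
  D_eq_zero : ∀ x w : W, ¬ (FullyCommutative cs x ∧ bruhatLE cs x w) → D x w = 0
  /-- The `a`-polynomials. -/
  apol : W → W → Polynomial ℤ
  /-- `(t_{w⁻¹})⁻¹ = q^{-ℓ(w)} Σ_{y ∈ W_c, y ≤ w} a_{y,w}(q) t_y` for `w ∈ W_c`. -/
  apol_eq : ∀ w : W, FullyCommutative cs w →
    proj (Tinv w⁻¹) = (LaurentPolynomial.T (-2 * (cs.length w : ℤ)) : A) •
      ∑ᶠ y ∈ {y | FullyCommutative cs y ∧ bruhatLE cs y w},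
        (Polynomial.aeval q (apol y w)) • proj (Tw y)
  apol_self : ∀ w : W, FullyCommutative cs w → apol w w = 1
  apol_eq_zero : ∀ y w : W,
    ¬ (FullyCommutative cs y ∧ FullyCommutative cs w ∧ bruhatLE cs y w) → apol y w = 0
  /-- The involution `ι` of the Temperley--Lieb algebra. -/
  iotaTL : TL →+* TL
  iotaTL_involutive : ∀ x : TL, iotaTL (iotaTL x) = x
  iotaTL_t : ∀ w : W, iotaTL (proj (Tw w)) = proj (Tinv w⁻¹)
  iotaTL_smul : ∀ (a : A) (x : TL),
    iotaTL (a • x) = (LaurentPolynomial.invert (R := ℤ) a) • iotaTL x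
  /-- The `L`-polynomials: `L x w` is a polynomial in the variable `v = q^{-1/2}`, and
  `L_{x,w}(q^{-1/2})` is obtained by evaluating it at `T (-1) = q^{-1/2}`. -/
  L : W → W → Polynomial ℤ
  /-- The IC basis `{c_w}` of `TL`. -/
  c : W → TL
  /-- `c_w = Σ_{x ∈ W_c, x ≤ w} q^{-ℓ(x)/2} L_{x,w}(q^{-1/2}) t_x`. -/
  c_eq : ∀ w : W, FullyCommutative cs w →
    c w = ∑ᶠ x ∈ {x | FullyCommutative cs x ∧ bruhatLE cs x w},
      ((LaurentPolynomial.T (-(cs.length x : ℤ)) : A) *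
        Polynomial.aeval (R := ℤ) ((LaurentPolynomial.T (-1) : A)) (L x w)) • proj (Tw x)
  /-- Convention: `c_x = 0` for `x ∉ W_c`. -/
  c_eq_zero : ∀ w : W, ¬ FullyCommutative cs w → c w = 0
  /-- The IC basis is `ι`-invariant. -/
  c_invariant : ∀ w : W, FullyCommutative cs w → iotaTL (c w) = c w
  L_self : ∀ w : W, L w w = 1
  L_eq_zero : ∀ x w : W,
    ¬ (FullyCommutative cs x ∧ FullyCommutative cs w ∧ bruhatLE cs x w) → L x w = 0
  /-- `L_{x,w}(q^{-1/2}) ∈ q^{-1/2} ℤ[q^{-1/2}]` for `x < w`. -/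
  L_coeff_zero : ∀ x w : W, bruhatLT cs x w → (L x w).coeff 0 = 0

namespace TLContext

variable {B : Type*} {W : Type*} [Group W] {M : CoxeterMatrix B} {cs : CoxeterSystem M W}
  {H : Type*} [Ring H] [Algebra A H] {TL : Type*} [Ring TL] [Algebra A TL]
  (Ctx : TLContext cs H TL)

/-- `μ(x,w)`: the coefficient of `q^{(ℓ(w)-ℓ(x)-1)/2}` in the Kazhdan--Lusztig
polynomial `P_{x,w}(q)` (which is zero unless `ℓ(w) - ℓ(x)` is odd). -/
def mu (x w : W) : ℤ :=
  if Odd (cs.length w - cs.length x) then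
    (Ctx.P x w).coeff ((cs.length w - cs.length x - 1) / 2)
  else 0

/-- The Kazhdan--Lusztig basis element `C'_w = q^{-ℓ(w)/2} Σ_{x ≤ w} P_{x,w}(q) T_x`. -/
def KL (w : W) : H :=
  (LaurentPolynomial.T (-(cs.length w : ℤ)) : A) •
    ∑ᶠ x ∈ {x | bruhatLE cs x w}, (Polynomial.aeval q (Ctx.P x w)) • Ctx.Tw x

/-- Condition (★): the projection sends the Kazhdan--Lusztig basis element `C'_w`
to `c_w` if `w ∈ W_c` and to `0` otherwise. -/
def Star : Prop :=
  (∀ w : W, FullyCommutative cs w → Ctx.proj (Ctx.KL w) = Ctx.c w) ∧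
  (∀ w : W, ¬ FullyCommutative cs w → Ctx.proj (Ctx.KL w) = 0)

/-- `L_{x,w}(q^{-1/2})` as an element of `A`. -/
def Lq (x w : W) : A := Polynomial.aeval (R := ℤ) ((LaurentPolynomial.T (-1) : A)) (Ctx.L x w)

/-- `L_{x,w}(q^{1/2})` as an element of `A`. -/
def Lq' (x w : W) : A := Polynomial.aeval (R := ℤ) ((LaurentPolynomial.T 1 : A)) (Ctx.L x w)

end TLContext

/-!
Under (★) the projection sends `C'_w` to `c_w` (and to `0` off `W_c`), so it suffices to prove
the Kazhdan–Lusztig multiplication formulas in `H`: `C'_s C'_w = C'_{sw} + Σ μ(z,w) C'_z` when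
`sw > w`, and `T_s C'_w = q C'_w` when `sw < w`.

For the first one, the difference of the two sides is `ι`-invariant, and its `T_x`-coefficient,
rescaled by `q^{ℓ(x)/2}`, lies in `q^{-1/2} ℤ[q^{-1/2}]`: the degree bound on `P_{x,w}` leaves only
constant terms to control, and the `μ`-sum is exactly what cancels them. An `ι`-invariant element
with this property vanishes: its `T_y`-coefficient for `y` of maximal length is, after rescaling,
a bar-invariant element of `q^{-1/2} ℤ[q^{-1/2}]`. The second formula follows by induction on
`ℓ(w)` from the first one applied to `sw`, because `T_s C'_s = q C'_s`.
-/

lemma coeff_T_mul (m : ℤ) (f : A) (n : ℤ) : (T m * f).coeff n = f.coeff (n - m) := by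
  rw [T, AddMonoidAlgebra.coeff_single_mul_apply, one_mul, neg_add_eq_sub]

lemma coeff_intCast (m n : ℤ) : (m : A).coeff n = if n = 0 then m else 0 := by
  rw [← C_apply, ← eq_intCast (C : ℤ →+* A)]

lemma coeff_toLaurent_natCast (f : ℤ[X]) (k : ℕ) : (toLaurent f).coeff (k : ℤ) = f.coeff k := by
  rw [LaurentPolynomial.coeff_toLaurent]
  exact Finsupp.mapDomain_apply Nat.castEmbedding.injective _ k

lemma coeff_aeval_q (f : ℤ[X]) (k : ℕ) :
    (aeval q f).coeff (k : ℤ) = if 2 ∣ k then f.coeff (k / 2) else 0 := by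
  have hq : aeval q f = toLaurent (expand ℤ 2 f) := by
    rw [q, show (2 : ℤ) = ((2 : ℕ) : ℤ) from rfl, ← Polynomial.toLaurent_X_pow,
      ← Polynomial.toLaurentAlg_apply, ← Polynomial.toLaurentAlg_apply,
      Polynomial.aeval_algHom_apply]
    rfl
  rw [hq, coeff_toLaurent_natCast, Polynomial.coeff_expand two_pos]

/-- `q^{-1/2} ℤ[q^{-1/2}]`. -/
def negSupported : AddSubgroup A where
  carrier := {f | ∀ n : ℤ, 0 ≤ n → f.coeff n = 0}
  add_mem' hf hg n hn := by simp [hf n hn, hg n hn]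
  zero_mem' _ _ := rfl
  neg_mem' hf n hn := by simp [hf n hn]

lemma eq_zero_of_invert_eq_self {f : A} (hf : f ∈ negSupported) (hinv : invert f = f) :
    f = 0 := by
  ext n
  rcases le_or_gt 0 n with hn | hn
  · exact hf n hn
  · rw [← hinv, invert_apply]
    exact hf (-n) (by omega)

lemma map_finsum_mem {α M N F : Type*} [AddCommMonoid M] [AddCommMonoid N] [FunLike F M N]
    [AddMonoidHomClass F M N] (g : F) (f : α → M) {s : Set α} (hs : s.Finite) :
    g (∑ᶠ i ∈ s, f i) = ∑ᶠ i ∈ s, g (f i) :=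
  (g : M →+ N).map_finsum_mem f hs

section Bruhat

variable {B : Type*} {W : Type*} [Group W] {M : CoxeterMatrix B} {cs : CoxeterSystem M W}

lemma length_le_of_bruhatLE {x w : W} (h : bruhatLE cs x w) : cs.length x ≤ cs.length w := by
  induction h with
  | refl => exact le_rfl
  | tail _ hstep ih => exact ih.trans hstep.2.le

lemma eq_of_bruhatLE_of_length_le {x w : W} (h : bruhatLE cs x w)
    (hl : cs.length w ≤ cs.length x) : x = w := by
  induction h with
  | refl => rfl
  | tail hxb hstep _ => exact absurd (length_le_of_bruhatLE hxb) (by have := hstep.2; omega)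

lemma length_lt_of_bruhatLT {x w : W} (h : bruhatLT cs x w) : cs.length x < cs.length w :=
  lt_of_not_ge fun hl => h.2 (eq_of_bruhatLE_of_length_le h.1 hl)

end Bruhat

section CoxeterSystem

variable {B : Type*} {W : Type*} [Group W] {M : CoxeterMatrix B} (cs : CoxeterSystem M W)

lemma _root_.CoxeterSystem.simple_mul_eq_iff {i : B} {x w : W} : cs.simple i * x = w ↔ x = cs.simple i * w := by
  constructor <;> rintro rfl <;> rw [cs.simple_mul_simple_cancel_left]

lemma _root_.CoxeterSystem.length_simple_mul_of_lt {i : B} {x : W} (h : cs.length x < cs.length (cs.simple i * x)) :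
    cs.length (cs.simple i * x) = cs.length x + 1 := by
  have := cs.length_simple_mul x i; omega

lemma _root_.CoxeterSystem.length_simple_mul_of_gt {i : B} {x : W} (h : cs.length (cs.simple i * x) < cs.length x) :
    cs.length (cs.simple i * x) + 1 = cs.length x := by
  have := cs.length_simple_mul x i; omega

lemma _root_.CoxeterSystem.single_simple_mul_apply {R : Type*} [Zero R] (i : B) (x y : W) (r : R) :
    Finsupp.single (cs.simple i * y) r x = Finsupp.single y r (cs.simple i * x) := by
  classical
  rw [Finsupp.single_apply, Finsupp.single_apply, cs.simple_mul_eq_iff]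

end CoxeterSystem

namespace TLContext

variable {B : Type*} {W : Type*} [Group W] {M : CoxeterMatrix B} {cs : CoxeterSystem M W}
  {H : Type*} [Ring H] [Algebra A H] {TL : Type*} [Ring TL] [Algebra A TL]
  (Ctx : TLContext cs H TL)

lemma Tw_mul_Tw_of_length_mul {x y : W} (h : cs.length (x * y) = cs.length x + cs.length y) :
    Ctx.Tw x * Ctx.Tw y = Ctx.Tw (x * y) := by
  induction hy : cs.length y using Nat.strong_induction_on generalizing y with
  | _ n ih =>
    rcases eq_or_ne y 1 with rfl | hne
    · rw [Ctx.Tw_one, mul_one, mul_one]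
    obtain ⟨j, hj⟩ := cs.exists_rightDescent_of_ne_one hne
    obtain ⟨y, rfl⟩ : ∃ y', y = y' * cs.simple j := ⟨y * cs.simple j, by simp⟩
    have hj : cs.length y < cs.length (y * cs.simple j) := by
      simpa only [CoxeterSystem.IsRightDescent, cs.simple_mul_simple_cancel_right] using hj
    have hly := cs.length_mul_simple y j
    have hxy : cs.length (x * y) = cs.length x + cs.length y := by
      have h1 := cs.length_mul_le x y
      have h2 := cs.length_mul_le (x * y) (cs.simple j)
      rw [mul_assoc, cs.length_simple] at h2
      omega
    rw [← Ctx.Tw_mul_simple_of_lt y j hj, ← mul_assoc, ih _ (by omega) hxy rfl, ← mul_assoc,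
      Ctx.Tw_mul_simple_of_lt _ j (by rw [mul_assoc]; omega)]

lemma Tw_simple_mul_of_lt {i : B} {x : W} (h : cs.length x < cs.length (cs.simple i * x)) :
    Ctx.Tw (cs.simple i) * Ctx.Tw x = Ctx.Tw (cs.simple i * x) :=
  Ctx.Tw_mul_Tw_of_length_mul (by rw [cs.length_simple_mul_of_lt h, cs.length_simple]; ring)

lemma Tw_simple_mul_self (i : B) :
    Ctx.Tw (cs.simple i) * Ctx.Tw (cs.simple i) = q • 1 + (q - 1) • Ctx.Tw (cs.simple i) := by
  have h := Ctx.Tw_mul_simple_of_gt (cs.simple i) i (by simp [cs.length_simple])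
  rwa [cs.simple_mul_simple_self, Ctx.Tw_one] at h

lemma Tw_simple_mul_of_gt {i : B} {x : W} (h : cs.length (cs.simple i * x) < cs.length x) :
    Ctx.Tw (cs.simple i) * Ctx.Tw x = q • Ctx.Tw (cs.simple i * x) + (q - 1) • Ctx.Tw x := by
  have hx : Ctx.Tw x = Ctx.Tw (cs.simple i) * Ctx.Tw (cs.simple i * x) := by
    rw [Ctx.Tw_simple_mul_of_lt (by rwa [cs.simple_mul_simple_cancel_left]),
      cs.simple_mul_simple_cancel_left]
  rw [hx, ← mul_assoc, Ctx.Tw_simple_mul_self, add_mul, smul_mul_assoc, smul_mul_assoc, one_mul]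

lemma Tinv_simple (i : B) :
    Ctx.Tinv (cs.simple i) = (T (-2) : A) • Ctx.Tw (cs.simple i) + (T (-2) - 1 : A) • 1 := by
  refine left_inv_eq_right_inv (Ctx.Tinv_mul_Tw _) ?_
  have hq : (T (-2) : A) * q = 1 := by rw [q, ← T_add]; norm_num
  rw [mul_add, mul_smul_comm, mul_smul_comm, mul_one, Tw_simple_mul_self, smul_add, smul_smul,
    smul_smul, hq, one_smul, add_assoc, ← add_smul, mul_sub, hq]
  simp

def basis : Module.Basis W A H := .mk Ctx.Tw_indep Ctx.Tw_span.ge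

lemma basis_apply (x : W) : Ctx.basis x = Ctx.Tw x := Module.Basis.mk_apply _ _ _

lemma repr_Tw (y : W) : Ctx.basis.repr (Ctx.Tw y) = Finsupp.single y 1 := by
  rw [← Ctx.basis_apply, Module.Basis.repr_self]

open Classical in
lemma repr_finsum_mem_smul_Tw {s : Set W} (hs : s.Finite) (f : W → A) (x : W) :
    Ctx.basis.repr (∑ᶠ y ∈ s, f y • Ctx.Tw y) x = if x ∈ s then f x else 0 := by
  rw [finsum_mem_eq_finite_toFinset_sum _ hs, map_sum, Finsupp.finsetSum_apply]
  simp [repr_Tw, Finsupp.single_apply, Finset.sum_ite_eq']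

lemma repr_KL (u x : W) :
    Ctx.basis.repr (Ctx.KL u) x = T (-(cs.length u : ℤ)) * aeval q (Ctx.P x u) := by
  rw [KL, map_smul, Finsupp.smul_apply, repr_finsum_mem_smul_Tw _ (Ctx.finite_bruhatLE u),
    smul_eq_mul]
  split_ifs with hxu
  · rfl
  · rw [Ctx.P_eq_zero x u hxu, map_zero]

lemma repr_Tinv_inv (u x : W) :
    Ctx.basis.repr (Ctx.Tinv u⁻¹) x =
      (-1) ^ cs.length u * T (-2 * (cs.length u : ℤ)) *
        ((-1) ^ cs.length x * aeval q (Ctx.R x u)) := by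
  rw [Ctx.Tinv_eq, map_smul, Finsupp.smul_apply, repr_finsum_mem_smul_Tw _ (Ctx.finite_bruhatLE u),
    smul_eq_mul]
  split_ifs with hxu
  · rfl
  · simp [Ctx.R_eq_zero x u hxu]

lemma repr_Tw_simple_mul_of_length_lt {i : B} {x : W}
    (hx : cs.length (cs.simple i * x) < cs.length x) (h : H) :
    Ctx.basis.repr (Ctx.Tw (cs.simple i) * h) x =
      Ctx.basis.repr h (cs.simple i * x) + (q - 1) * Ctx.basis.repr h x := by
  suffices Finsupp.lapply x ∘ₗ Ctx.basis.repr.toLinearMap ∘ₗ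
      LinearMap.mulLeft A (Ctx.Tw (cs.simple i)) =
      Finsupp.lapply (cs.simple i * x) ∘ₗ Ctx.basis.repr.toLinearMap +
        (q - 1) • (Finsupp.lapply x ∘ₗ Ctx.basis.repr.toLinearMap) from
    LinearMap.congr_fun this h
  refine Ctx.basis.ext fun y => ?_
  simp only [LinearMap.comp_apply, LinearMap.add_apply, LinearMap.smul_apply, basis_apply,
    LinearMap.mulLeft_apply, LinearEquiv.coe_toLinearMap, Finsupp.lapply_apply, repr_Tw,
    smul_eq_mul]
  rcases lt_or_gt_of_ne (cs.length_simple_mul_ne y i) with hy | hy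
  · have hyx : y ≠ cs.simple i * x := by
      rintro rfl; rw [cs.simple_mul_simple_cancel_left] at hy; omega
    rw [Ctx.Tw_simple_mul_of_gt hy, map_add, map_smul, map_smul, repr_Tw, repr_Tw]
    simp only [Finsupp.add_apply, Finsupp.smul_apply, smul_eq_mul, cs.single_simple_mul_apply,
      Finsupp.single_eq_of_ne' hyx, mul_zero, zero_add]
  · have hyx : y ≠ x := by rintro rfl; omega
    rw [Ctx.Tw_simple_mul_of_lt hy, repr_Tw, cs.single_simple_mul_apply,
      Finsupp.single_eq_of_ne' hyx, mul_zero, add_zero]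

lemma repr_Tw_simple_mul_of_length_gt {i : B} {x : W}
    (hx : cs.length x < cs.length (cs.simple i * x)) (h : H) :
    Ctx.basis.repr (Ctx.Tw (cs.simple i) * h) x = q * Ctx.basis.repr h (cs.simple i * x) := by
  suffices Finsupp.lapply x ∘ₗ Ctx.basis.repr.toLinearMap ∘ₗ
      LinearMap.mulLeft A (Ctx.Tw (cs.simple i)) =
      q • (Finsupp.lapply (cs.simple i * x) ∘ₗ Ctx.basis.repr.toLinearMap) from
    LinearMap.congr_fun this h
  refine Ctx.basis.ext fun y => ?_
  simp only [LinearMap.comp_apply, LinearMap.smul_apply, basis_apply, LinearMap.mulLeft_apply,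
    LinearEquiv.coe_toLinearMap, Finsupp.lapply_apply, repr_Tw, smul_eq_mul]
  rcases lt_or_gt_of_ne (cs.length_simple_mul_ne y i) with hy | hy
  · have hyx : y ≠ x := by rintro rfl; omega
    rw [Ctx.Tw_simple_mul_of_gt hy, map_add, map_smul, map_smul, repr_Tw, repr_Tw]
    simp only [Finsupp.add_apply, Finsupp.smul_apply, smul_eq_mul, cs.single_simple_mul_apply,
      Finsupp.single_eq_of_ne' hyx, mul_zero, add_zero]
  · have hyx : y ≠ cs.simple i * x := by
      rintro rfl; rw [cs.simple_mul_simple_cancel_left] at hy; omega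
    rw [Ctx.Tw_simple_mul_of_lt hy, repr_Tw, cs.single_simple_mul_apply,
      Finsupp.single_eq_of_ne' hyx, mul_zero]

lemma repr_iotaH_of_forall_length_le {h : H} {y : W}
    (hmax : ∀ x ∈ (Ctx.basis.repr h).support, cs.length x ≤ cs.length y) :
    Ctx.basis.repr (Ctx.iotaH h) y =
      invert (Ctx.basis.repr h y) * T (-2 * (cs.length y : ℤ)) := by
  conv_lhs => rw [← Ctx.basis.linearCombination_repr h, Finsupp.linearCombination_apply,
    Finsupp.sum, map_sum, map_sum, Finsupp.finsetSum_apply]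
  simp only [Ctx.iotaH_smul, basis_apply, Ctx.iotaH_Tw, map_smul, Finsupp.smul_apply,
    smul_eq_mul, repr_Tinv_inv]
  rw [Finset.sum_eq_single y]
  · have hsign : ((-1 : A) ^ cs.length y) * (-1) ^ cs.length y = 1 := by
      rw [← pow_add, Even.neg_one_pow ⟨_, rfl⟩]
    rw [Ctx.R_self, map_one, mul_one]
    linear_combination (invert (Ctx.basis.repr h y) * T (-2 * (cs.length y : ℤ))) * hsign
  · intro x hx hxy
    by_cases hyx : bruhatLE cs y x
    · exact absurd (eq_of_bruhatLE_of_length_le hyx (hmax x hx)).symm hxy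
    · rw [Ctx.R_eq_zero y x hyx]; simp
  · intro hy
    rw [Finsupp.notMem_support_iff.mp hy]; simp

/-- The coefficient of `T_x`, rescaled by `q^{ℓ(x)/2}`; for `h = C'_u` it is
`q^{(ℓ(x)-ℓ(u))/2} P_{x,u}(q)`. -/
def normCoeff (x : W) : H →ₗ[A] A :=
  (T (cs.length x : ℤ) : A) • (Finsupp.lapply x ∘ₗ Ctx.basis.repr.toLinearMap)

lemma normCoeff_apply (x : W) (h : H) :
    Ctx.normCoeff x h = T (cs.length x : ℤ) * Ctx.basis.repr h x := rfl

lemma eq_zero_of_iotaH_eq_self {h : H} (hinv : Ctx.iotaH h = h)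
    (hneg : ∀ x, Ctx.normCoeff x h ∈ negSupported) : h = 0 := by
  by_contra hne
  obtain ⟨y, hy, hmax⟩ := Finset.exists_max_image (Ctx.basis.repr h).support cs.length
    (Finsupp.support_nonempty_iff.mpr (by simpa using hne))
  have hrepr := Ctx.repr_iotaH_of_forall_length_le hmax
  rw [hinv] at hrepr
  have hfixed : invert (Ctx.normCoeff y h) = Ctx.normCoeff y h := by
    rw [normCoeff_apply, map_mul, invert_T]
    conv_rhs => rw [hrepr]
    have hT : (T (cs.length y : ℤ) : A) * T (-(cs.length y : ℤ)) = 1 := by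
      rw [← T_add, add_neg_cancel, T_zero]
    rw [show -2 * (cs.length y : ℤ) = -(cs.length y) + -(cs.length y) by ring, T_add]
    linear_combination (-(invert (Ctx.basis.repr h y) * T (-(cs.length y : ℤ)))) * hT
  have hzero := eq_zero_of_invert_eq_self (hneg y) hfixed
  rw [normCoeff_apply, (isUnit_T _).mul_right_eq_zero] at hzero
  exact Finsupp.mem_support_iff.mp hy hzero

/-- `C'_s = q^{-1/2} (T_s + 1)`. -/
def Cs (i : B) : H := (T (-1) : A) • (Ctx.Tw (cs.simple i) + 1)

lemma T_one_smul_Cs (i : B) : (T 1 : A) • Ctx.Cs i = Ctx.Tw (cs.simple i) + 1 := by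
  rw [Cs, smul_smul, ← T_add]; simp

lemma Tw_simple_mul_Cs (i : B) : Ctx.Tw (cs.simple i) * Ctx.Cs i = q • Ctx.Cs i := by
  have h : Ctx.Tw (cs.simple i) * (Ctx.Tw (cs.simple i) + 1) =
      q • (Ctx.Tw (cs.simple i) + 1) := by
    rw [mul_add, mul_one, Tw_simple_mul_self, sub_smul, one_smul, smul_add]
    abel
  rw [Cs, mul_smul_comm, h, smul_comm]

lemma iotaH_Cs (i : B) : Ctx.iotaH (Ctx.Cs i) = Ctx.Cs i := by
  rw [Cs, Ctx.iotaH_smul, map_add, map_one, Ctx.iotaH_Tw, cs.inv_simple, Tinv_simple, invert_T,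
    neg_neg, add_assoc, sub_smul, one_smul, sub_add_cancel, ← smul_add, smul_smul, ← T_add]
  norm_num

lemma normCoeff_Cs_mul (i : B) (x : W) (h : H) :
    Ctx.normCoeff x (Ctx.Cs i * h) = Ctx.normCoeff (cs.simple i * x) h +
      T ((cs.length x : ℤ) - cs.length (cs.simple i * x)) * Ctx.normCoeff x h := by
  have hT : (T (-1) : A) * T 1 = 1 := by rw [← T_add]; simp
  have hq : q = T 1 * T 1 := by rw [q, ← T_add]; rfl
  rw [Cs, smul_mul_assoc, add_mul, one_mul, map_smul, map_add, smul_eq_mul]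
  simp only [normCoeff_apply]
  rcases lt_or_gt_of_ne (cs.length_simple_mul_ne x i) with hx | hx
  · rw [repr_Tw_simple_mul_of_length_lt _ hx, ← cs.length_simple_mul_of_gt hx, Nat.cast_succ,
      add_sub_cancel_left, T_add, hq]
    linear_combination (T (cs.length (cs.simple i * x) : ℤ) *
      (Ctx.basis.repr h (cs.simple i * x) + T 1 * T 1 * Ctx.basis.repr h x)) * hT
  · rw [repr_Tw_simple_mul_of_length_gt _ hx, cs.length_simple_mul_of_lt hx, Nat.cast_succ,
      sub_add_cancel_left, T_add, hq]
    linear_combination (T (cs.length x : ℤ) * T 1 * Ctx.basis.repr h (cs.simple i * x)) * hT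

lemma iotaH_KL_eq_KL (u : W) : Ctx.iotaH (Ctx.KL u) = Ctx.KL u := Ctx.iotaH_KL u

lemma mu_eq_zero_of_not_bruhatLE {x u : W} (h : ¬ bruhatLE cs x u) : Ctx.mu x u = 0 := by
  simp [mu, Ctx.P_eq_zero x u h]

lemma bruhatLT_of_mu_ne_zero {x u : W} (h : Ctx.mu x u ≠ 0) : bruhatLT cs x u :=
  ⟨by_contra (h ∘ Ctx.mu_eq_zero_of_not_bruhatLE), by rintro rfl; simp [mu] at h⟩

lemma coeff_aeval_q_P {x u : W} (hxu : bruhatLT cs x u) {k : ℕ}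
    (hk : cs.length u - cs.length x - 1 ≤ k) :
    (aeval q (Ctx.P x u)).coeff (k : ℤ) =
      if k = cs.length u - cs.length x - 1 then Ctx.mu x u else 0 := by
  have hdeg := Ctx.P_degree x u hxu
  have hlen := length_lt_of_bruhatLT hxu
  rw [coeff_aeval_q]
  split_ifs with hk2 hkd hkd
  · rw [mu, if_pos (by obtain ⟨m, hm⟩ := hk2; exact ⟨m, by omega⟩), hkd]
  · exact Polynomial.coeff_eq_zero_of_natDegree_lt (by obtain ⟨m, hm⟩ := hk2; omega)
  · rw [mu, if_neg (by rintro ⟨m, hm⟩; exact hk2 ⟨m, by omega⟩)]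
  · rfl

lemma normCoeff_KL (u x : W) :
    Ctx.normCoeff x (Ctx.KL u) =
      T (cs.length x : ℤ) * (T (-(cs.length u : ℤ)) * aeval q (Ctx.P x u)) := by
  rw [normCoeff_apply, repr_KL]

lemma normCoeff_KL_self (u : W) : Ctx.normCoeff u (Ctx.KL u) = 1 := by
  rw [normCoeff_KL, Ctx.P_self, map_one, mul_one, ← T_add, add_neg_cancel, T_zero]

lemma coeff_normCoeff_KL {x u : W} (hxu : x ≠ u) {n : ℤ} (hn : -1 ≤ n) :
    (Ctx.normCoeff x (Ctx.KL u)).coeff n = if n = -1 then Ctx.mu x u else 0 := by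
  rw [normCoeff_KL, coeff_T_mul, coeff_T_mul]
  by_cases hle : bruhatLE cs x u
  · have hlt : bruhatLT cs x u := ⟨hle, hxu⟩
    have hlen := length_lt_of_bruhatLT hlt
    have hk : n - cs.length x - -(cs.length u : ℤ) =
        ((n + cs.length u - cs.length x).toNat : ℕ) := by
      omega
    rw [hk, Ctx.coeff_aeval_q_P hlt (by omega)]
    congr 1
    apply propext
    omega
  · simp [Ctx.P_eq_zero x u hle, Ctx.mu_eq_zero_of_not_bruhatLE hle]

lemma normCoeff_KL_mem {x u : W} (hxu : x ≠ u) :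
    Ctx.normCoeff x (Ctx.KL u) ∈ negSupported := fun n hn => by
  rw [Ctx.coeff_normCoeff_KL hxu (by omega), if_neg (by omega)]

lemma T_one_mul_normCoeff_KL_sub_mem {x u : W} (hxu : x ≠ u) :
    T 1 * Ctx.normCoeff x (Ctx.KL u) - (Ctx.mu x u : A) ∈ negSupported := fun n hn => by
  rw [AddMonoidAlgebra.coeff_sub, Finsupp.sub_apply, coeff_T_mul,
    Ctx.coeff_normCoeff_KL hxu (by omega), coeff_intCast]
  simp

lemma T_neg_one_mul_normCoeff_KL_mem (x u : W) :
    T (-1) * Ctx.normCoeff x (Ctx.KL u) ∈ negSupported := fun n hn => by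
  rcases eq_or_ne x u with rfl | hxu
  · rw [normCoeff_KL_self, mul_one, T_apply, if_neg (by omega)]
  · rw [coeff_T_mul, Ctx.coeff_normCoeff_KL hxu (by omega), if_neg (by omega)]

open Classical in
lemma mk_normCoeff_KL (x u : W) :
    ((Ctx.normCoeff x (Ctx.KL u) : A) : A ⧸ negSupported) =
      ((if x = u then 1 else 0 : A) : A ⧸ negSupported) := by
  refine QuotientAddGroup.eq_iff_sub_mem.mpr ?_
  split_ifs with hxu
  · rw [hxu, normCoeff_KL_self, sub_self]; exact zero_mem _
  · rw [sub_zero]; exact Ctx.normCoeff_KL_mem hxu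

def muSet (i : B) (w : W) : Set W :=
  {x | bruhatLT cs x w ∧ Ctx.mu x w ≠ 0 ∧ cs.length (cs.simple i * x) < cs.length x}

lemma muSet_finite (i : B) (w : W) : (Ctx.muSet i w).Finite :=
  (Ctx.finite_bruhatLE w).subset fun _ hx => hx.1.1

open Classical in
lemma sum_muSet_zsmul_ite {i : B} {x : W} (w : W)
    (hx : cs.length (cs.simple i * x) < cs.length x) :
    ∑ z ∈ (Ctx.muSet_finite i w).toFinset, Ctx.mu z w • (if x = z then 1 else 0 : A) =
      Ctx.mu x w := by
  simp only [smul_ite, smul_zero, Finset.sum_ite_eq, Set.Finite.mem_toFinset, zsmul_one]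
  refine ite_eq_left_iff.mpr fun hxF => ?_
  by_contra hne
  have hmu : Ctx.mu x w ≠ 0 := fun h0 => hne (by rw [h0, Int.cast_zero])
  exact hxF ⟨Ctx.bruhatLT_of_mu_ne_zero hmu, hmu, hx⟩

lemma normCoeff_Cs_mul_KL_sub_mem {i : B} {w : W}
    (hw : cs.length w < cs.length (cs.simple i * w)) (x : W) :
    Ctx.normCoeff x (Ctx.Cs i * Ctx.KL w -
      (Ctx.KL (cs.simple i * w) + ∑ᶠ z ∈ Ctx.muSet i w, Ctx.mu z w • Ctx.KL z)) ∈
      negSupported := by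
  rw [finsum_mem_eq_finite_toFinset_sum _ (Ctx.muSet_finite i w)]
  simp only [map_sub, map_add, map_sum, map_zsmul, normCoeff_Cs_mul]
  rcases lt_or_gt_of_ne (cs.length_simple_mul_ne x i) with hx | hx
  · rw [← cs.length_simple_mul_of_gt hx, Nat.cast_succ, add_sub_cancel_left]
    -- modulo `negSupported` only constant terms survive: `[sx = w] + μ(x,w)` from `C'_s C'_w`,
    -- the same from `C'_{sw}` and the `μ`-sum
    have hxw : x ≠ w := by rintro rfl; omega
    have hmu : ((T 1 * Ctx.normCoeff x (Ctx.KL w) : A) : A ⧸ negSupported) =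
        ((Ctx.mu x w : A) : A ⧸ negSupported) :=
      QuotientAddGroup.eq_iff_sub_mem.mpr (Ctx.T_one_mul_normCoeff_KL_sub_mem hxw)
    rw [← QuotientAddGroup.eq_zero_iff]
    simp only [QuotientAddGroup.mk_add, QuotientAddGroup.mk_sub, QuotientAddGroup.mk_sum,
      QuotientAddGroup.mk_zsmul, mk_normCoeff_KL, hmu]
    rw [cs.simple_mul_eq_iff, ← Ctx.sum_muSet_zsmul_ite w hx, QuotientAddGroup.mk_sum]
    simp only [QuotientAddGroup.mk_zsmul]
    abel
  · rw [cs.length_simple_mul_of_lt hx, Nat.cast_succ, sub_add_cancel_left]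
    have hsxw : cs.simple i * x ≠ w := by
      rintro rfl; rw [cs.simple_mul_simple_cancel_left] at hw; omega
    refine sub_mem (add_mem ?_ ?_) (add_mem ?_ (sum_mem fun z hz => zsmul_mem ?_ _))
    · exact Ctx.normCoeff_KL_mem hsxw
    · exact Ctx.T_neg_one_mul_normCoeff_KL_mem x w
    · exact Ctx.normCoeff_KL_mem fun h => hsxw (cs.simple_mul_eq_iff.mpr h)
    · refine Ctx.normCoeff_KL_mem ?_
      rintro rfl
      exact absurd ((Set.Finite.mem_toFinset _).mp hz).2.2 (by omega)

lemma iotaH_finsum_muSet (i : B) (w : W) :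
    Ctx.iotaH (∑ᶠ z ∈ Ctx.muSet i w, Ctx.mu z w • Ctx.KL z) =
      ∑ᶠ z ∈ Ctx.muSet i w, Ctx.mu z w • Ctx.KL z := by
  rw [map_finsum_mem Ctx.iotaH _ (Ctx.muSet_finite i w)]
  simp [iotaH_KL_eq_KL]

lemma Cs_mul_KL_of_lt {i : B} {w : W} (hw : cs.length w < cs.length (cs.simple i * w)) :
    Ctx.Cs i * Ctx.KL w =
      Ctx.KL (cs.simple i * w) + ∑ᶠ z ∈ Ctx.muSet i w, Ctx.mu z w • Ctx.KL z := by
  rw [← sub_eq_zero]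
  refine Ctx.eq_zero_of_iotaH_eq_self ?_ (Ctx.normCoeff_Cs_mul_KL_sub_mem hw)
  rw [map_sub, map_mul, map_add, iotaH_Cs, iotaH_KL_eq_KL, iotaH_KL_eq_KL, iotaH_finsum_muSet]

lemma Tw_simple_mul_KL_of_lt {i : B} {w : W} (hw : cs.length w < cs.length (cs.simple i * w)) :
    Ctx.Tw (cs.simple i) * Ctx.KL w = -Ctx.KL w + (T 1 : A) •
      (Ctx.KL (cs.simple i * w) + ∑ᶠ z ∈ Ctx.muSet i w, Ctx.mu z w • Ctx.KL z) := by
  rw [← Ctx.Cs_mul_KL_of_lt hw, ← smul_mul_assoc, T_one_smul_Cs, add_mul, one_mul]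
  abel

lemma Tw_simple_mul_KL_of_gt {i : B} {w : W} (hw : cs.length (cs.simple i * w) < cs.length w) :
    Ctx.Tw (cs.simple i) * Ctx.KL w = q • Ctx.KL w := by
  induction hn : cs.length w using Nat.strong_induction_on generalizing w with
  | _ n ih =>
    set w' := cs.simple i * w
    have hKL := Ctx.Cs_mul_KL_of_lt (w := w') (by rwa [cs.simple_mul_simple_cancel_left])
    rw [cs.simple_mul_simple_cancel_left, ← sub_eq_iff_eq_add] at hKL
    have hmu : Ctx.Tw (cs.simple i) * ∑ᶠ z ∈ Ctx.muSet i w', Ctx.mu z w' • Ctx.KL z =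
        q • ∑ᶠ z ∈ Ctx.muSet i w', Ctx.mu z w' • Ctx.KL z := by
      rw [mul_finsum_mem' _ _ (Ctx.muSet_finite _ _), smul_finsum_mem (Ctx.muSet_finite _ _)]
      refine finsum_mem_congr rfl fun z hz => ?_
      have hz' := length_lt_of_bruhatLT hz.1
      rw [mul_smul_comm, ih _ (by omega) hz.2.2 rfl, smul_comm]
    rw [← hKL, mul_sub, ← mul_assoc, Tw_simple_mul_Cs, smul_mul_assoc, hmu, smul_sub]

lemma proj_KL (hstar : Ctx.Star) (u : W) : Ctx.proj (Ctx.KL u) = Ctx.c u := by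
  by_cases hu : FullyCommutative cs u
  · exact hstar.1 u hu
  · rw [hstar.2 u hu, Ctx.c_eq_zero u hu]

end TLContext

theorem statement5_general {B : Type*} {W : Type*} [Group W] {M : CoxeterMatrix B} {cs : CoxeterSystem M W}
    {H : Type*} [Ring H] [Algebra A H] {TL : Type*} [Ring TL] [Algebra A TL]
    (Ctx : TLContext cs H TL)
    (hstar : Ctx.Star) (i : B) (w : W) :
    (cs.length w < cs.length (cs.simple i * w) →
      Ctx.proj (Ctx.Tw (cs.simple i)) * Ctx.c w =
        - Ctx.c w + (LaurentPolynomial.T 1 : A) •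
          (Ctx.c (cs.simple i * w) +
            ∑ᶠ x ∈ {x | bruhatLT cs x w ∧ Ctx.mu x w ≠ 0 ∧
                cs.length (cs.simple i * x) < cs.length x},
              Ctx.mu x w • Ctx.c x)) ∧
    (¬ cs.length w < cs.length (cs.simple i * w) →
      Ctx.proj (Ctx.Tw (cs.simple i)) * Ctx.c w = q • Ctx.c w) := by
  refine ⟨fun hlt => ?_, fun hge => ?_⟩
  · have h := congrArg Ctx.proj (Ctx.Tw_simple_mul_KL_of_lt hlt)
    rw [map_mul, map_add, map_neg, map_smul, map_add,
      map_finsum_mem Ctx.proj _ (Ctx.muSet_finite i w)] at h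
    simp only [map_zsmul, Ctx.proj_KL hstar] at h
    exact h
  · have h := congrArg Ctx.proj (Ctx.Tw_simple_mul_KL_of_gt
      (lt_of_le_of_ne (not_lt.mp hge) (cs.length_simple_mul_ne w i)))
    rwa [map_mul, map_smul, Ctx.proj_KL hstar] at h

/-- Corollary (paper, Cor. `txc`): if `X` satisfies (★), `s ∈ S` and `w ∈ W_c`, then
`t_s c_w = -c_w + q^{1/2}(c_{sw} + Σ_{x ≺ w, sx < x} μ(x,w) c_x)` if `ℓ(sw) > ℓ(w)`, and
`t_s c_w = q c_w` otherwise (with the convention `c_x = 0` for `x ∉ W_c`). -/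
theorem statement5 {B : Type*} {W : Type*} [Group W] {M : CoxeterMatrix B} {cs : CoxeterSystem M W}
    {H : Type*} [Ring H] [Algebra A H] {TL : Type*} [Ring TL] [Algebra A TL]
    (Ctx : TLContext cs H TL)
    (hstar : Ctx.Star) (i : B) (w : W) (hw : FullyCommutative cs w) :
    (cs.length w < cs.length (cs.simple i * w) →
      Ctx.proj (Ctx.Tw (cs.simple i)) * Ctx.c w =
        - Ctx.c w + (LaurentPolynomial.T 1 : A) •
          (Ctx.c (cs.simple i * w) +
            ∑ᶠ x ∈ {x | bruhatLT cs x w ∧ Ctx.mu x w ≠ 0 ∧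
                cs.length (cs.simple i * x) < cs.length x},
              Ctx.mu x w • Ctx.c x)) ∧
    (¬ cs.length w < cs.length (cs.simple i * w) →
      Ctx.proj (Ctx.Tw (cs.simple i)) * Ctx.c w = q • Ctx.c w) :=
  statement5_general Ctx hstar i w

end TLPaper
end
end

section
/- Let X be a Coxeter graph satisfying condition (★) and let w ∈ W_c(X). Then Σ_{x ∈ W_c(X), x ≤ w} (−1)^{ℓ(x)} (−1)^{ℓ(w)} a_{x,w}(q) = q^{ℓ(w)}. -/
/-!
Common setup: Coxeter systems, Bruhat order, fully commutative elements,
the Hecke algebra `H(X)`, the generalized Temperley--Lieb algebra `TL(X)`,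
and the polynomial families `R`, `P` (Kazhdan--Lusztig), `D`, `a`, `L`.
-/

open LaurentPolynomial Polynomial

noncomputable section

namespace TLPaper

variable {B : Type*} {W : Type*} [Group W] {M : CoxeterMatrix B} (cs : CoxeterSystem M W)

/-!
The sign character `T_w ↦ (-1)^{ℓ(w)}` of `H(X)` is multiplicative and kills each generator
`Σ_{u ∈ ⟨s_i, s_j⟩} T_u` of `J(X)`, because left multiplication by `s_i` permutes `⟨s_i, s_j⟩`
and flips every sign. Hence it factors through `TL(X)`. Since `T_{w⁻¹}⁻¹` has sign
`(-1)^{ℓ(w)}`, applying it to the expansion of `(t_{w⁻¹})⁻¹` in the `a`-polynomials gives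
`(-1)^{ℓ(w)} = q^{-ℓ(w)} Σ_{y} (-1)^{ℓ(y)} a_{y,w}(q)`, which is the claim.
-/

lemma map_finsum_mem_of_finite {α M N F : Type*} [AddCommMonoid M] [AddCommMonoid N]
    [FunLike F M N] [AddMonoidHomClass F M N] (f : F) (g : α → M) {s : Set α} (hs : s.Finite) :
    f (∑ᶠ i ∈ s, g i) = ∑ᶠ i ∈ s, f (g i) :=
  (f : M →+ N).map_finsum_mem g hs

lemma neg_one_pow_mul_neg_one_pow {R : Type*} [Monoid R] [HasDistribNeg R] (n : ℕ) :
    (-1 : R) ^ n * (-1 : R) ^ n = 1 := by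
  rw [← pow_add, ← two_mul, pow_mul, neg_one_sq, one_pow]

lemma q_pow (n : ℕ) : q ^ n = T (2 * n) := by
  rw [q, T_pow, mul_comm]

lemma aeval_q_eq_toLaurent_expand (p : ℤ[X]) : aeval q p = toLaurent (expand ℤ 2 p) := by
  suffices aeval q = toLaurentAlg.comp (expand ℤ 2) from congrArg (· p) this
  refine Polynomial.algHom_ext ?_
  simp [q]

instance : CharZero A :=
  charZero_of_injective_algebraMap (R := ℤ[X]) toLaurent_injective

lemma aeval_q_injective : Function.Injective (aeval (R := ℤ) q) := by
  intro p r h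
  simp only [aeval_q_eq_toLaurent_expand] at h
  exact expand_injective two_pos (toLaurent_injective h)

lemma _root_.CoxeterSystem.finsum_mem_neg_one_pow_length_eq_zero {B W R : Type*} [Group W]
    {M : CoxeterMatrix B} (cs : CoxeterSystem M W) [Ring R] [IsAddTorsionFree R]
    (G : Subgroup W) {i : B} (hi : cs.simple i ∈ G) (hG : (G : Set W).Finite) :
    ∑ᶠ u ∈ (G : Set W), (-1 : R) ^ cs.length u = 0 := by
  have hbij : Set.BijOn (cs.simple i * ·) (G : Set W) G :=
    ⟨fun u hu => G.mul_mem hi hu, (mul_right_injective _).injOn,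
      fun v hv => ⟨cs.simple i * v, G.mul_mem hi hv, cs.simple_mul_simple_cancel_left i⟩⟩
  have hflip (u : W) : (-1 : R) ^ cs.length u = -(-1 : R) ^ cs.length (cs.simple i * u) := by
    rcases cs.length_simple_mul u i with h | h
    · rw [h, pow_succ, mul_neg_one, neg_neg]
    · rw [← h, pow_succ, mul_neg_one]
  rw [← self_eq_neg, ← finsum_mem_neg_distrib _ hG]
  exact finsum_mem_eq_of_bijOn _ hbij fun u _ => hflip u

namespace TLContext

variable {B : Type*} {W : Type*} [Group W] {M : CoxeterMatrix B} {cs : CoxeterSystem M W}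
  {H : Type*} [Ring H] [Algebra A H] {TL : Type*} [Ring TL] [Algebra A TL]
  (Ctx : TLContext cs H TL)

def basisTw : Module.Basis W A H := Module.Basis.mk Ctx.Tw_indep Ctx.Tw_span.ge

@[simp]
lemma basisTw_apply (w : W) : Ctx.basisTw w = Ctx.Tw w := Module.Basis.mk_apply _ _ w

def sign : H →ₗ[A] A := Ctx.basisTw.constr A fun w => (-1 : A) ^ cs.length w

@[simp]
lemma sign_Tw (w : W) : Ctx.sign (Ctx.Tw w) = (-1 : A) ^ cs.length w := by
  rw [← basisTw_apply]
  exact Ctx.basisTw.constr_basis A _ w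

lemma sign_one : Ctx.sign 1 = 1 := by
  rw [← Ctx.Tw_one, sign_Tw, cs.length_one, pow_zero]

lemma sign_mul_Tw_simple (h : H) (i : B) :
    Ctx.sign (h * Ctx.Tw (cs.simple i)) = -Ctx.sign h := by
  suffices Ctx.sign ∘ₗ LinearMap.mulRight A (Ctx.Tw (cs.simple i)) = -Ctx.sign from
    LinearMap.congr_fun this h
  refine Ctx.basisTw.ext fun x => ?_
  simp only [LinearMap.comp_apply, LinearMap.mulRight_apply, LinearMap.neg_apply, basisTw_apply]
  rcases cs.length_mul_simple x i with hl | hl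
  · rw [Ctx.Tw_mul_simple_of_lt x i (by omega), sign_Tw, sign_Tw, hl, pow_succ]
    ring
  · rw [Ctx.Tw_mul_simple_of_gt x i (by omega), map_add, map_smul, map_smul, sign_Tw, sign_Tw,
      ← hl, pow_succ, smul_eq_mul, smul_eq_mul]
    ring

lemma sign_mul_Tw (h : H) (w : W) :
    Ctx.sign (h * Ctx.Tw w) = (-1 : A) ^ cs.length w * Ctx.sign h := by
  induction hn : cs.length w generalizing w with
  | zero => rw [cs.length_eq_zero_iff.mp hn, Ctx.Tw_one, mul_one, pow_zero, one_mul]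
  | succ n ih =>
    obtain ⟨i, hi⟩ := cs.exists_rightDescent_of_ne_one (w := w) (by rintro rfl; simp at hn)
    rw [cs.isRightDescent_iff] at hi
    have hw : w * cs.simple i * cs.simple i = w := cs.simple_mul_simple_cancel_right i
    have hT : Ctx.Tw w = Ctx.Tw (w * cs.simple i) * Ctx.Tw (cs.simple i) := by
      rw [Ctx.Tw_mul_simple_of_lt _ i (by rw [hw]; omega), hw]
    rw [hT, ← mul_assoc, sign_mul_Tw_simple, ih _ (by omega), pow_succ]
    ring

lemma sign_mul (x y : H) : Ctx.sign (x * y) = Ctx.sign x * Ctx.sign y := by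
  suffices Ctx.sign ∘ₗ LinearMap.mulLeft A x = Ctx.sign x • Ctx.sign from
    LinearMap.congr_fun this y
  refine Ctx.basisTw.ext fun u => ?_
  simp only [LinearMap.comp_apply, LinearMap.mulLeft_apply, LinearMap.smul_apply, basisTw_apply,
    sign_mul_Tw, sign_Tw, smul_eq_mul, mul_comm]

lemma sign_Tinv (w : W) : Ctx.sign (Ctx.Tinv w) = (-1 : A) ^ cs.length w := by
  have hinv : Ctx.sign (Ctx.Tinv w) * (-1 : A) ^ cs.length w = 1 := by
    rw [← Ctx.sign_Tw w, ← sign_mul, Ctx.Tinv_mul_Tw, sign_one]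
  linear_combination (-1 : A) ^ cs.length w * hinv -
    Ctx.sign (Ctx.Tinv w) * neg_one_pow_mul_neg_one_pow (R := A) (cs.length w)

lemma sign_finsum_mem_subgroup (G : Subgroup W) {i : B} (hi : cs.simple i ∈ G) :
    Ctx.sign (∑ᶠ u ∈ (G : Set W), Ctx.Tw u) = 0 := by
  by_cases hG : (G : Set W).Finite
  · rw [map_finsum_mem_of_finite _ _ hG]
    simpa using cs.finsum_mem_neg_one_pow_length_eq_zero G hi hG
  · have hsupp : (G : Set W) ∩ Function.support Ctx.Tw = G :=
      Set.inter_eq_self_of_subset_left fun u _ => Ctx.Tw_indep.ne_zero u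
    rw [finsum_mem_eq_zero_of_infinite (by rwa [hsupp]), map_zero]

lemma sign_eq_zero_of_proj_eq_zero {h : H} (hh : Ctx.proj h = 0) : Ctx.sign h = 0 := by
  refine LinearMap.mem_ker.mp (Submodule.span_le.mpr ?_ ((Ctx.proj_ker h).mp hh))
  rintro x ⟨i, j, a, b, -, -, -, rfl⟩
  rw [SetLike.mem_coe, LinearMap.mem_ker, sign_mul, sign_mul,
    sign_finsum_mem_subgroup _ _ (Subgroup.subset_closure (Set.mem_insert _ _)), mul_zero, zero_mul]

lemma finite_fullyCommutative_bruhatLE (Ctx : TLContext cs H TL) (w : W) :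
    {y | FullyCommutative cs y ∧ bruhatLE cs y w}.Finite :=
  (Ctx.finite_bruhatLE w).subset fun _ hy => hy.2

lemma finsum_neg_one_pow_mul_aeval_apol (w : W) (hw : FullyCommutative cs w) :
    ∑ᶠ y ∈ {y | FullyCommutative cs y ∧ bruhatLE cs y w},
        (-1 : A) ^ cs.length y * aeval q (Ctx.apol y w) =
      (-1 : A) ^ cs.length w * q ^ cs.length w := by
  have hS := Ctx.finite_fullyCommutative_bruhatLE w
  set sumA := ∑ᶠ y ∈ {y | FullyCommutative cs y ∧ bruhatLE cs y w},
    (-1 : A) ^ cs.length y * aeval q (Ctx.apol y w)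
  have hproj : Ctx.proj (Ctx.Tinv w⁻¹ - (T (-2 * (cs.length w : ℤ)) : A) •
      ∑ᶠ y ∈ {y | FullyCommutative cs y ∧ bruhatLE cs y w},
        aeval q (Ctx.apol y w) • Ctx.Tw y) = 0 := by
    simp only [map_sub, map_smul, map_finsum_mem_of_finite _ _ hS, Ctx.apol_eq w hw, sub_self]
  have hsign : (-1 : A) ^ cs.length w = T (-2 * (cs.length w : ℤ)) * sumA := by
    have := Ctx.sign_eq_zero_of_proj_eq_zero hproj
    simp only [map_sub, map_smul, map_finsum_mem_of_finite _ _ hS, sign_Tw, sign_Tinv,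
      cs.length_inv, smul_eq_mul, sub_eq_zero] at this
    simp only [this, sumA, mul_comm]
  have hT : (T (2 * (cs.length w : ℤ)) : A) * T (-2 * (cs.length w : ℤ)) = 1 := by
    rw [← T_add, neg_mul, add_neg_cancel, T_zero]
  rw [q_pow]
  linear_combination (-T (2 * (cs.length w : ℤ)) : A) * hsign - sumA * hT

end TLContext

theorem statement9_general {B : Type*} {W : Type*} [Group W] {M : CoxeterMatrix B} {cs : CoxeterSystem M W}
    {H : Type*} [Ring H] [Algebra A H] {TL : Type*} [Ring TL] [Algebra A TL]
    (Ctx : TLContext cs H TL)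
    (w : W) (hw : FullyCommutative cs w) :
    ∑ᶠ x ∈ {x | FullyCommutative cs x ∧ bruhatLE cs x w},
      ((-1 : Polynomial ℤ) ^ cs.length x * (-1 : Polynomial ℤ) ^ cs.length w *
        Ctx.apol x w) =
      Polynomial.X ^ cs.length w := by
  have hS := Ctx.finite_fullyCommutative_bruhatLE w
  apply aeval_q_injective
  simp only [map_finsum_mem_of_finite _ _ hS, map_mul, map_pow, map_neg, map_one, aeval_X,
    mul_right_comm _ ((-1 : A) ^ cs.length w), ← finsum_mem_mul' _ _ hS]
  rw [Ctx.finsum_neg_one_pow_mul_aeval_apol w hw, mul_right_comm, neg_one_pow_mul_neg_one_pow,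
    one_mul]

/-- Proposition (paper, Prop. `apollo`): if `X` satisfies (★) and `w ∈ W_c`, then
`Σ_{x ∈ W_c, x ≤ w} ε_x ε_w a_{x,w}(q) = q^{ℓ(w)}`. -/
theorem statement9 {B : Type*} {W : Type*} [Group W] {M : CoxeterMatrix B} {cs : CoxeterSystem M W}
    {H : Type*} [Ring H] [Algebra A H] {TL : Type*} [Ring TL] [Algebra A TL]
    (Ctx : TLContext cs H TL)
    (hstar : Ctx.Star) (w : W) (hw : FullyCommutative cs w) :
    ∑ᶠ x ∈ {x | FullyCommutative cs x ∧ bruhatLE cs x w},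
      ((-1 : Polynomial ℤ) ^ cs.length x * (-1 : Polynomial ℤ) ^ cs.length w *
        Ctx.apol x w) =
      Polynomial.X ^ cs.length w :=
  statement9_general Ctx w hw

end TLPaper
end
end
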